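/- arXiv:1701.04493 — 3 statements merged into one kernel-verified Lean document; each statement's English description precedes it below -/
import Mathlib

section
/- For every positive integer n, the n-th Catalan number satisfies Cat(n) ≤ (e/(√2·π)) · 4^n · n^(-3/2). -/
/-!
`Cat(n) = C(2n, n) / (n + 1)`. Stirling's lower bound for `n!` and upper bound for `(2n)!` give
`C(2n, n) ≤ e / (√2 π) · 4ⁿ / √n`, and `1 / (n + 1) ≤ 1 / n` supplies the remaining factor
`n⁻¹`.
-/

open Real Nat

namespace Stirling

theorem stirlingSeq_le_exp_one_div_sqrt_two {n : ℕ} (hn : n ≠ 0) :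
    stirlingSeq n ≤ exp 1 / √2 := by
  obtain ⟨m, rfl⟩ := Nat.exists_eq_succ_of_ne_zero hn
  simpa [stirlingSeq_one] using stirlingSeq'_antitone (Nat.zero_le m)

theorem factorial_le_stirling {n : ℕ} (hn : n ≠ 0) :
    (n ! : ℝ) ≤ exp 1 * √n * (n / exp 1) ^ n := by
  have h := stirlingSeq_le_exp_one_div_sqrt_two hn
  rw [stirlingSeq, div_le_iff₀ (by positivity)] at h
  refine h.trans_eq ?_
  rw [sqrt_mul zero_le_two]
  field_simp

end Stirling

namespace Nat

theorem cast_centralBinom {K : Type*} [DivisionSemiring K] [CharZero K] (n : ℕ) :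
    (centralBinom n : K) = (2 * n)! / (n ! ^ 2 : K) := by
  rw [centralBinom_eq_two_mul_choose, cast_choose K (by omega), two_mul, Nat.add_sub_cancel, sq]

theorem cast_catalan {K : Type*} [Semifield K] [CharZero K] (n : ℕ) :
    (catalan n : K) = centralBinom n / (n + 1 : K) := by
  rw [← succ_mul_catalan_eq_centralBinom, cast_mul, cast_succ,
    mul_div_cancel_left₀ _ (by exact_mod_cast succ_ne_zero n)]

theorem cast_centralBinom_le_stirling {n : ℕ} (hn : n ≠ 0) :
    (centralBinom n : ℝ) ≤ exp 1 / (√2 * π) * 4 ^ n / √n := by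
  have hn0 : (0 : ℝ) < n := by positivity
  calc (centralBinom n : ℝ) = (2 * n)! / (n ! ^ 2 : ℝ) := cast_centralBinom n
    _ ≤ exp 1 * √(2 * n : ℕ) * ((2 * n : ℕ) / exp 1) ^ (2 * n) /
          (√(2 * π * n) * (n / exp 1) ^ n) ^ 2 := by
      gcongr
      · exact Stirling.factorial_le_stirling (by omega)
      · exact Stirling.le_factorial_stirling n
    _ = exp 1 / (√2 * π) * 4 ^ n / √n := by
      push_cast
      rw [mul_pow, sq_sqrt (by positivity), ← pow_mul, sqrt_mul zero_le_two, div_pow, div_pow,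
        mul_pow, pow_mul, pow_mul]
      field_simp
      rw [sq_sqrt zero_le_two, sq_sqrt hn0.le]
      ring

end Nat

namespace Real

theorem rpow_neg_three_halves {x : ℝ} (hx : 0 ≤ x) : x ^ (-(3 : ℝ) / 2) = 1 / (√x * x) := by
  rcases hx.eq_or_lt with rfl | hx
  · simp
  rw [show -(3 : ℝ) / 2 = -(1 / 2 + 1) by norm_num, rpow_neg hx.le, rpow_add hx, ← sqrt_eq_rpow,
    rpow_one, one_div]

end Real

/-- For every positive integer `n`, the `n`-th Catalan number satisfies
`Cat(n) ≤ (e/(√2·π)) · 4^n · n^(-3/2)`. -/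
theorem catalan_upper_bound (n : ℕ) (hn : 1 ≤ n) :
    (catalan n : ℝ) ≤ Real.exp 1 / (Real.sqrt 2 * Real.pi) * 4 ^ n * (n : ℝ) ^ (-(3 : ℝ) / 2) := by
  have hn0 : (0 : ℝ) < n := by exact_mod_cast hn
  calc (catalan n : ℝ) = centralBinom n / (n + 1 : ℝ) := cast_catalan n
    _ ≤ exp 1 / (√2 * π) * 4 ^ n / √n / n := by
      gcongr
      · exact cast_centralBinom_le_stirling (by omega)
      · linarith
    _ = _ := by rw [rpow_neg_three_halves hn0.le]; ring
end

section
/- For all positive integers r, s with r + s ≤ k, the ratio Cat(r+s+1)/(Cat(r)·Cat(s)) is at most (e^5/(√8·π^2)) · k^(3/2), and in particular at most 6·k^(3/2). -/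
/-!
By symmetry let `s ≤ r`, so that `2 s ≤ k`. Since `Cat(n + 1) ≤ 4 Cat(n)`, the numerator is at most
`4 ^ (s + 1) Cat(r)`, while `Cat(s) ≥ 4 ^ s / (2 √s (s + 1))`. Hence the ratio is at most
`8 √s (s + 1)`, which is below `(9/2) k ^ (3/2)` except when `r = s = 1, k = 2`, where the ratio is
`Cat(3) = 5`. Numerically `9/2 ≤ e⁵ / (√8 π²) ≤ 6`.
-/

theorem catalan_pos (n : ℕ) : 0 < catalan n :=
  Nat.pos_of_mul_pos_left ((succ_mul_catalan_eq_centralBinom n).symm ▸ n.centralBinom_pos)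

theorem add_two_mul_catalan_succ (n : ℕ) :
    (n + 2) * catalan (n + 1) = 2 * (2 * n + 1) * catalan n := by
  apply Nat.eq_of_mul_eq_mul_left n.succ_pos
  calc (n + 1) * ((n + 2) * catalan (n + 1))
      = (n + 1) * (n + 1).centralBinom := by rw [← succ_mul_catalan_eq_centralBinom]
    _ = 2 * (2 * n + 1) * ((n + 1) * catalan n) := by
      rw [Nat.succ_mul_centralBinom_succ, succ_mul_catalan_eq_centralBinom]
    _ = (n + 1) * (2 * (2 * n + 1) * catalan n) := by ring

theorem catalan_succ_le (n : ℕ) : catalan (n + 1) ≤ 4 * catalan n := by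
  refine Nat.le_of_mul_le_mul_left ?_ (show 0 < n + 2 by omega)
  rw [add_two_mul_catalan_succ]
  nlinarith

theorem catalan_add_le (n m : ℕ) : catalan (n + m) ≤ 4 ^ m * catalan n := by
  induction m with
  | zero => simp
  | succ m ih =>
    calc catalan (n + m + 1) ≤ 4 * catalan (n + m) := catalan_succ_le _
      _ ≤ 4 * (4 ^ m * catalan n) := by gcongr
      _ = 4 ^ (m + 1) * catalan n := by ring

theorem sixteen_pow_le_catalan_sq {n : ℕ} (hn : 1 ≤ n) :
    16 ^ n ≤ 4 * n * (n + 1) ^ 2 * catalan n ^ 2 := by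
  induction n, hn using Nat.le_induction with
  | base => simp [catalan_one]
  | succ n _ ih =>
    calc 16 ^ (n + 1) = 16 * 16 ^ n := by ring
      _ ≤ 16 * (4 * n * (n + 1) ^ 2 * catalan n ^ 2) := by gcongr
      _ ≤ 4 * (n + 1) * (2 * (2 * n + 1) * catalan n) ^ 2 := by
        have : 4 * n * (n + 1) ≤ (2 * n + 1) ^ 2 := by nlinarith
        nlinarith [Nat.mul_le_mul_right (16 * (n + 1) * catalan n ^ 2) this]
      _ = 4 * (n + 1) * (n + 1 + 1) ^ 2 * catalan (n + 1) ^ 2 := by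
        rw [← add_two_mul_catalan_succ]; ring

theorem catalan_add_add_one_sq_le (r : ℕ) {s : ℕ} (hs : 1 ≤ s) :
    catalan (r + s + 1) ^ 2 ≤ 64 * s * (s + 1) ^ 2 * (catalan r * catalan s) ^ 2 := by
  calc catalan (r + s + 1) ^ 2 ≤ (4 ^ (s + 1) * catalan r) ^ 2 := by
        gcongr; exact catalan_add_le r (s + 1)
    _ = 16 ^ (s + 1) * catalan r ^ 2 := by rw [mul_pow, ← pow_mul, mul_comm (s + 1), pow_mul]; norm_num
    _ = 16 * 16 ^ s * catalan r ^ 2 := by ring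
    _ ≤ 16 * (4 * s * (s + 1) ^ 2 * catalan s ^ 2) * catalan r ^ 2 := by
        gcongr; exact sixteen_pow_le_catalan_sq hs
    _ = 64 * s * (s + 1) ^ 2 * (catalan r * catalan s) ^ 2 := by ring

theorem four_mul_catalan_add_add_one_sq_le {k r s : ℕ} (hr : 1 ≤ r) (hs : 1 ≤ s)
    (hrs : r + s ≤ k) :
    4 * catalan (r + s + 1) ^ 2 ≤ 81 * k ^ 3 * (catalan r * catalan s) ^ 2 := by
  wlog hsr : s ≤ r generalizing r s
  · simpa only [add_comm s r, mul_comm (catalan s)] using this hs hr (by omega) (by omega)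
  obtain rfl | hk : k = 2 ∨ 3 ≤ k := by omega
  · obtain ⟨rfl, rfl⟩ : r = 1 ∧ s = 1 := by omega
    simp [catalan_one, catalan_three]
  · have hpoly : 256 * s * (s + 1) ^ 2 ≤ 81 * k ^ 3 := by
      have h2s : 2 * s ≤ k := by omega
      rcases Nat.lt_or_ge s 2 with h | h
      · obtain rfl : s = 1 := by omega
        nlinarith [Nat.pow_le_pow_left hk 3]
      · have : 256 * (s + 1) ^ 2 ≤ 648 * s ^ 2 := by nlinarith
        nlinarith [Nat.mul_le_mul_left s this, Nat.pow_le_pow_left h2s 3]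
    calc 4 * catalan (r + s + 1) ^ 2
        ≤ 4 * (64 * s * (s + 1) ^ 2 * (catalan r * catalan s) ^ 2) := by
          gcongr; exact catalan_add_add_one_sq_le r hs
      _ = 256 * s * (s + 1) ^ 2 * (catalan r * catalan s) ^ 2 := by ring
      _ ≤ 81 * k ^ 3 * (catalan r * catalan s) ^ 2 := by gcongr

theorem catalan_ratio_le {k r s : ℕ} (hr : 1 ≤ r) (hs : 1 ≤ s) (hrs : r + s ≤ k) :
    (catalan (r + s + 1) : ℝ) / (catalan r * catalan s) ≤ 9 / 2 * (k : ℝ) ^ ((3 : ℝ) / 2) := by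
  have hprod : (0 : ℝ) < catalan r * catalan s := by
    have := catalan_pos r; have := catalan_pos s; positivity
  have hk : ((k : ℝ) ^ ((3 : ℝ) / 2)) ^ 2 = (k : ℝ) ^ 3 := by
    rw [← Real.rpow_natCast, ← Real.rpow_mul (by positivity)]; norm_num
  have hnat : (4 * catalan (r + s + 1) ^ 2 : ℝ) ≤ 81 * k ^ 3 * (catalan r * catalan s) ^ 2 := by
    exact_mod_cast four_mul_catalan_add_add_one_sq_le hr hs hrs
  rw [← pow_le_pow_iff_left₀ (by positivity) (by positivity) two_ne_zero, div_pow,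
    div_le_iff₀ (by positivity), mul_pow (9 / 2 : ℝ), hk]
  linarith

theorem nine_halves_le_exp_one_pow_div : 9 / 2 ≤ Real.exp 1 ^ 5 / (√8 * Real.pi ^ 2) := by
  have hsqrt : √8 ≤ 3 := Real.sqrt_le_iff.2 ⟨by norm_num, by norm_num⟩
  rw [le_div_iff₀ (by positivity)]
  calc 9 / 2 * (√8 * Real.pi ^ 2) ≤ 9 / 2 * (3 * 3.15 ^ 2) := by
        gcongr; exact Real.pi_lt_d2.le
    _ ≤ 2.7 ^ 5 := by norm_num
    _ ≤ Real.exp 1 ^ 5 := by gcongr; linarith [Real.exp_one_gt_d9]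

theorem exp_one_pow_div_le_six : Real.exp 1 ^ 5 / (√8 * Real.pi ^ 2) ≤ 6 := by
  have hsqrt : 2.8 ≤ √8 := (Real.le_sqrt (by norm_num) (by norm_num)).2 (by norm_num)
  rw [div_le_iff₀ (by positivity)]
  calc Real.exp 1 ^ 5 ≤ 2.72 ^ 5 := by gcongr; linarith [Real.exp_one_lt_d9]
    _ ≤ 6 * (2.8 * 3.14 ^ 2) := by norm_num
    _ ≤ 6 * (√8 * Real.pi ^ 2) := by gcongr; exact Real.pi_gt_d2.le

/-- For positive integers `r, s` with `r + s ≤ k`, the ratio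
`Cat(r+s+1)/(Cat(r)·Cat(s))` is at most `(e⁵/(√8·π²))·k^(3/2)`, and in
particular at most `6·k^(3/2)`. -/
theorem catalan_ratio_bound (k r s : ℕ) (hr : 1 ≤ r) (hs : 1 ≤ s) (hrs : r + s ≤ k) :
    (catalan (r + s + 1) : ℝ) / (catalan r * catalan s) ≤
        (Real.exp 1) ^ 5 / (Real.sqrt 8 * Real.pi ^ 2) * (k : ℝ) ^ ((3 : ℝ) / 2) ∧
      (catalan (r + s + 1) : ℝ) / (catalan r * catalan s) ≤ 6 * (k : ℝ) ^ ((3 : ℝ) / 2) := by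
  have hk : (0 : ℝ) ≤ (k : ℝ) ^ ((3 : ℝ) / 2) := by positivity
  have hC : _ ≤ _ * (k : ℝ) ^ ((3 : ℝ) / 2) :=
    (catalan_ratio_le hr hs hrs).trans (mul_le_mul_of_nonneg_right nine_halves_le_exp_one_pow_div hk)
  exact ⟨hC, hC.trans (mul_le_mul_of_nonneg_right exp_one_pow_div_le_six hk)⟩
end

section
/- For any permutation σ ∈ S_k, the number of monotone factorizations of σ of length |σ| equals ∏_{i=1}^{ℓ(μ)} Cat(μ_i − 1), where μ is the cycle type of σ and Cat is the Catalan number. -/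
/-- `L` is a monotone factorization of `σ ∈ S_k`: a list of pairs `(s_i, t_i)`
with `s_i < t_i`, weakly decreasing maxima `t_1 ≥ t_2 ≥ …`, whose associated
transpositions multiply to `σ`. -/
def IsMonotoneFactorization {k : ℕ} (σ : Equiv.Perm (Fin k)) (L : List (Fin k × Fin k)) : Prop :=
  (∀ p ∈ L, p.1 < p.2) ∧ L.Pairwise (fun p q => q.2 ≤ p.2) ∧
    (L.map fun p => Equiv.swap p.1 p.2).prod = σ

/-- The number of monotone factorizations of `σ` of length `l`. -/
noncomputable def numMF {k : ℕ} (σ : Equiv.Perm (Fin k)) (l : ℕ) : ℕ :=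
  Set.ncard {L : List (Fin k × Fin k) | L.length = l ∧ IsMonotoneFactorization σ L}

/-- `|σ| = k - (number of cycles of σ, including fixed points)`. -/
def permLength {k : ℕ} (σ : Equiv.Perm (Fin k)) : ℕ :=
  σ.cycleType.sum - Multiset.card σ.cycleType

/-!
Write `|σ| = ∑ (#O - 1)` over the orbits `O` of `σ`, fixed points included. Left multiplication
by a transposition `(a b)` only touches the orbits through `a` and `b`: it splits their common
orbit, or merges two orbits, so `|(a b) σ| = |σ| ∓ 1`. Hence every transposition of a
factorization of length `|σ|` splits a cycle, and all of them move only points of the support.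
If `M` is the largest point moved by `σ ≠ 1`, the first transposition of a minimal monotone
factorization must then be `(s, M)` with `s` in the cycle of `M`, followed by a minimal monotone
factorization of `(s M) σ`, and conversely. Taking `s = σ^j M` cuts the `m`-cycle of `M` into
cycles of lengths `j` and `m - j`, so the count obeys Segner's recursion
`Cat (m - 1) = ∑_{0 < j < m} Cat (j - 1) Cat (m - j - 1)`.
-/

open Equiv Finset

namespace Equiv.Perm

lemma prod_swap_apply_of_forall_ne {α : Type*} [DecidableEq α] {x : α} {L : List (α × α)}
    (h : ∀ p ∈ L, p.1 ≠ x ∧ p.2 ≠ x) :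
    (L.map fun p => swap p.1 p.2).prod x = x := by
  induction L with
  | nil => rfl
  | cons q L ih =>
    rw [List.forall_mem_cons] at h
    rw [List.map_cons, List.prod_cons, mul_apply, ih h.2,
      swap_apply_of_ne_of_ne h.1.1.symm h.1.2.symm]

variable {α : Type*} [Fintype α] [DecidableEq α] {σ : Perm α} {a b x y : α}

def orbitFinset (σ : Perm α) (x : α) : Finset α := {y | σ.SameCycle x y}

@[simp]
lemma mem_orbitFinset : y ∈ σ.orbitFinset x ↔ σ.SameCycle x y := by
  simp [orbitFinset]

lemma mem_orbitFinset_self (σ : Perm α) (x : α) : x ∈ σ.orbitFinset x :=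
  mem_orbitFinset.2 SameCycle.rfl

lemma pow_apply_mem_orbitFinset (σ : Perm α) (x : α) (n : ℕ) :
    (σ ^ n) x ∈ σ.orbitFinset x :=
  mem_orbitFinset.2 ⟨n, by simp⟩

lemma orbitFinset_eq_iff : σ.orbitFinset x = σ.orbitFinset y ↔ σ.SameCycle x y := by
  refine ⟨fun h => mem_orbitFinset.1 (h ▸ mem_orbitFinset_self σ y), fun h => ?_⟩
  ext z
  simp only [mem_orbitFinset]
  exact ⟨h.symm.trans, h.trans⟩

lemma disjoint_orbitFinset_iff :
    _root_.Disjoint (σ.orbitFinset x) (σ.orbitFinset y) ↔ ¬σ.SameCycle x y := by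
  rw [Finset.disjoint_left]
  refine ⟨fun h hxy => h (mem_orbitFinset_self σ x) (mem_orbitFinset.2 hxy.symm),
    fun h z hx hy => h ((mem_orbitFinset.1 hx).trans (mem_orbitFinset.1 hy).symm)⟩

lemma orbitFinset_of_apply_eq (hx : σ x = x) : σ.orbitFinset x = {x} := by
  ext y
  simp only [mem_orbitFinset, mem_singleton]
  exact ⟨fun h => (h.eq_of_left hx).symm, fun h => h ▸ SameCycle.rfl⟩

lemma support_cycleOf_eq_orbitFinset (hx : x ∈ σ.support) :
    (σ.cycleOf x).support = σ.orbitFinset x := by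
  ext y
  rw [mem_support_cycleOf_iff, mem_orbitFinset]
  exact and_iff_left hx

lemma isCycleOn_orbitFinset (σ : Perm α) (x : α) : σ.IsCycleOn (σ.orbitFinset x) := by
  by_cases hx : x ∈ σ.support
  · rw [← support_cycleOf_eq_orbitFinset hx]
    exact σ.isCycleOn_support_cycleOf x
  · rw [notMem_support] at hx
    rw [orbitFinset_of_apply_eq hx, coe_singleton, isCycleOn_singleton]
    exact hx

lemma pow_apply_injOn_orbitFinset (σ : Perm α) (x : α) :
    Set.InjOn (fun i => (σ ^ i) x) (Set.Iio #(σ.orbitFinset x)) := by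
  intro i hi i' hi' h
  have := ((isCycleOn_orbitFinset σ x).pow_apply_eq_pow_apply (mem_orbitFinset_self σ x)).1 h
  rwa [Nat.ModEq, Nat.mod_eq_of_lt hi, Nat.mod_eq_of_lt hi'] at this

lemma pow_apply_ne_self_of_lt {j : ℕ} (hj0 : 0 < j) (hj : j < #(σ.orbitFinset x)) :
    (σ ^ j) x ≠ x := fun h =>
  hj0.ne' (pow_apply_injOn_orbitFinset σ x hj (Set.mem_Iio.2 (hj0.trans hj)) (by simpa using h))

lemma one_lt_card_orbitFinset (hx : x ∈ σ.support) : 1 < #(σ.orbitFinset x) :=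
  one_lt_card.2 ⟨x, mem_orbitFinset_self σ x, σ x,
    mem_orbitFinset.2 (sameCycle_apply_right.2 .rfl), (mem_support.1 hx).symm⟩

lemma sum_range_pow_apply_eq_sum_erase {β : Type*} [AddCommMonoid β] (g : α → β) :
    ∑ i ∈ range (#(σ.orbitFinset x) - 1), g ((σ ^ (i + 1)) x) =
      ∑ y ∈ (σ.orbitFinset x).erase x, g y := by
  have hinj := pow_apply_injOn_orbitFinset σ x
  refine sum_nbij (fun i => (σ ^ (i + 1)) x) (fun i hi => ?_) (fun i hi i' hi' h => ?_)
    (fun y hy => ?_) (fun _ _ => rfl)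
  · rw [mem_range] at hi
    exact mem_erase.2
      ⟨pow_apply_ne_self_of_lt i.add_one_pos (by omega), pow_apply_mem_orbitFinset σ x _⟩
  · rw [coe_range, Set.mem_Iio] at hi hi'
    have : i + 1 = i' + 1 := hinj (Set.mem_Iio.2 (by omega)) (Set.mem_Iio.2 (by omega)) h
    omega
  · obtain ⟨hyx, hy⟩ := mem_erase.1 hy
    obtain ⟨j, hj, rfl⟩ :=
      (isCycleOn_orbitFinset σ x).exists_pow_eq (mem_orbitFinset_self σ x) hy
    rcases j with _ | i
    · exact absurd (by simp) hyx
    · exact ⟨i, by simp only [coe_range, Set.mem_Iio]; omega, rfl⟩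

lemma mem_support_of_sameCycle (hab : a ≠ b) (h : σ.SameCycle a b) : a ∈ σ.support :=
  mem_support.2 fun ha => hab (h.eq_of_left ha)

lemma support_swap_mul_subset (ha : a ∈ σ.support) (hb : b ∈ σ.support) :
    (swap a b * σ).support ⊆ σ.support := by
  refine (support_mul_le _ _).trans (sup_le (fun y hy => ?_) le_rfl)
  have hab : a ≠ b := fun h => by simp [h] at hy
  rw [support_swap hab, mem_insert, mem_singleton] at hy
  rcases hy with rfl | rfl <;> assumption

def orbits (σ : Perm α) : Finset (Finset α) := univ.image σ.orbitFinset

lemma mem_orbits {O : Finset α} : O ∈ σ.orbits ↔ ∃ x, σ.orbitFinset x = O := by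
  simp [orbits]

lemma image_support_cycleFactorsFinset :
    σ.cycleFactorsFinset.image support = {O ∈ σ.orbits | 1 < #O} := by
  ext O
  simp only [mem_image, mem_filter, mem_orbits]
  constructor
  · rintro ⟨c, hc, rfl⟩
    obtain ⟨x, hx⟩ := (mem_cycleFactorsFinset_iff.1 hc).1.nonempty_support
    have hxσ : x ∈ σ.support := mem_cycleFactorsFinset_support_le hc hx
    refine ⟨⟨x, ?_⟩, (mem_cycleFactorsFinset_iff.1 hc).1.two_le_card_support⟩
    rw [cycle_is_cycleOf hx hc, support_cycleOf_eq_orbitFinset hxσ]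
  · rintro ⟨⟨x, rfl⟩, hcard⟩
    have hx : x ∈ σ.support := by
      by_contra hx
      rw [orbitFinset_of_apply_eq (notMem_support.1 hx), card_singleton] at hcard
      exact lt_irrefl 1 hcard
    exact ⟨σ.cycleOf x, cycleOf_mem_cycleFactorsFinset_iff.2 hx,
      support_cycleOf_eq_orbitFinset hx⟩

@[to_additive]
lemma prod_map_cycleType {β : Type*} [CommMonoid β] (g : ℕ → β) (hg : g 1 = 1) :
    (σ.cycleType.map g).prod = ∏ O ∈ σ.orbits, g #O := by
  have hinj : Set.InjOn support (σ.cycleFactorsFinset : Set (Perm α)) := by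
    intro c hc d hd h
    obtain ⟨x, hx⟩ := (mem_cycleFactorsFinset_iff.1 hc).1.nonempty_support
    rw [cycle_is_cycleOf hx hc, cycle_is_cycleOf (h ▸ hx) hd]
  rw [cycleType_def, Multiset.map_map, ← prod_eq_multiset_prod,
    ← prod_filter_of_ne (p := fun O : Finset α => 1 < #O) fun O hO hgO => ?_,
    ← image_support_cycleFactorsFinset, prod_image hinj]
  · rfl
  obtain ⟨x, rfl⟩ := mem_orbits.1 hO
  exact lt_of_le_of_ne (card_pos.2 ⟨x, mem_orbitFinset_self σ x⟩) fun h => hgO (h ▸ hg)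

lemma sameCycle_swap_mul_iff (ha : ¬σ.SameCycle y a) (hb : ¬σ.SameCycle y b) {z : α} :
    (swap a b * σ).SameCycle y z ↔ σ.SameCycle y z := by
  have hpow : ∀ n : ℕ, ((swap a b * σ) ^ n) y = (σ ^ n) y := by
    intro n
    induction n with
    | zero => rfl
    | succ n ih =>
      have hne : ∀ c, ¬σ.SameCycle y c → (σ ^ (n + 1)) y ≠ c :=
        fun c hc h => hc (h ▸ sameCycle_pow_right.2 SameCycle.rfl)
      rw [pow_succ', mul_apply, ih, mul_apply, ← mul_apply σ, ← pow_succ',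
        swap_apply_of_ne_of_ne (hne a ha) (hne b hb)]
  constructor <;> intro h <;> obtain ⟨n, rfl⟩ := h.exists_nat_pow_eq <;>
    exact hpow n ▸ sameCycle_pow_right.2 SameCycle.rfl

lemma orbitFinset_swap_mul_of_notMem (hy : y ∉ σ.orbitFinset a ∪ σ.orbitFinset b) :
    (swap a b * σ).orbitFinset y = σ.orbitFinset y := by
  simp only [mem_union, mem_orbitFinset, not_or, sameCycle_comm (x := a), sameCycle_comm (x := b)]
    at hy
  ext z
  simp only [mem_orbitFinset]
  exact sameCycle_swap_mul_iff hy.1 hy.2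

lemma notMem_union_orbitFinset_swap_mul (hy : y ∉ σ.orbitFinset a ∪ σ.orbitFinset b) :
    y ∉ (swap a b * σ).orbitFinset a ∪ (swap a b * σ).orbitFinset b := by
  simp only [mem_union, mem_orbitFinset, not_or, sameCycle_comm (x := a), sameCycle_comm (x := b)]
    at hy ⊢
  rwa [sameCycle_swap_mul_iff hy.1 hy.2, sameCycle_swap_mul_iff hy.1 hy.2]

lemma orbitFinset_union_swap_mul :
    (swap a b * σ).orbitFinset a ∪ (swap a b * σ).orbitFinset b =
      σ.orbitFinset a ∪ σ.orbitFinset b := by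
  ext y
  refine ⟨not_imp_not.1 notMem_union_orbitFinset_swap_mul, not_imp_not.1 fun hy => ?_⟩
  simpa only [swap_mul_self_mul] using notMem_union_orbitFinset_swap_mul hy

lemma filter_not_disjoint_orbits :
    {O ∈ σ.orbits | ¬_root_.Disjoint O (σ.orbitFinset a ∪ σ.orbitFinset b)} =
      {σ.orbitFinset a, σ.orbitFinset b} := by
  ext O
  simp only [mem_filter, mem_orbits, mem_insert, mem_singleton, disjoint_union_right]
  constructor
  · rintro ⟨⟨y, rfl⟩, h⟩
    simpa only [disjoint_orbitFinset_iff, not_and_or, not_not, orbitFinset_eq_iff] using h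
  · rintro (rfl | rfl)
    · exact ⟨⟨a, rfl⟩, fun h => disjoint_orbitFinset_iff.1 h.1 SameCycle.rfl⟩
    · exact ⟨⟨b, rfl⟩, fun h => disjoint_orbitFinset_iff.1 h.2 SameCycle.rfl⟩

lemma filter_disjoint_orbits_swap_mul :
    {O ∈ (swap a b * σ).orbits | _root_.Disjoint O (σ.orbitFinset a ∪ σ.orbitFinset b)} =
      {O ∈ σ.orbits | _root_.Disjoint O (σ.orbitFinset a ∪ σ.orbitFinset b)} := by
  ext O
  simp only [mem_filter, mem_orbits, and_congr_left_iff]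
  intro hO
  have hO' : ∀ y ∈ O, (swap a b * σ).orbitFinset y = σ.orbitFinset y :=
    fun y hy => orbitFinset_swap_mul_of_notMem (disjoint_left.1 hO hy)
  constructor
  · rintro ⟨y, rfl⟩
    exact ⟨y, (hO' y (mem_orbitFinset_self _ y)).symm⟩
  · rintro ⟨y, rfl⟩
    exact ⟨y, hO' y (mem_orbitFinset_self σ y)⟩

@[to_additive]
lemma prod_orbits_eq_mul_prod_pair {β : Type*} [CommMonoid β] (f : Finset α → β) (a b : α) :
    ∏ O ∈ σ.orbits, f O =
      (∏ O ∈ σ.orbits with _root_.Disjoint O (σ.orbitFinset a ∪ σ.orbitFinset b), f O) *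
        ∏ O ∈ {σ.orbitFinset a, σ.orbitFinset b}, f O := by
  rw [← prod_filter_mul_prod_filter_not σ.orbits
      (fun O => _root_.Disjoint O (σ.orbitFinset a ∪ σ.orbitFinset b)),
    filter_not_disjoint_orbits]

lemma prod_orbits_eq_prod_filter_disjoint_mul {β : Type*} [CommMonoid β] (f : Finset α → β)
    (x : α) :
    ∏ O ∈ σ.orbits, f O =
      (∏ O ∈ σ.orbits with _root_.Disjoint O (σ.orbitFinset x), f O) *
        f (σ.orbitFinset x) := by
  simpa only [union_self, pair_eq_singleton, prod_singleton] using
    prod_orbits_eq_mul_prod_pair f x x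

lemma sum_orbits_swap_mul {β : Type*} [AddCommMonoid β] (f : Finset α → β) (a b : α) :
    ∑ O ∈ (swap a b * σ).orbits, f O + ∑ O ∈ {σ.orbitFinset a, σ.orbitFinset b}, f O =
      ∑ O ∈ σ.orbits, f O +
        ∑ O ∈ {(swap a b * σ).orbitFinset a, (swap a b * σ).orbitFinset b}, f O := by
  rw [sum_orbits_eq_add_sum_pair (σ := swap a b * σ) f a b,
    sum_orbits_eq_add_sum_pair (σ := σ) f a b, orbitFinset_union_swap_mul,
    filter_disjoint_orbits_swap_mul, add_right_comm]

section Split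

variable {j : ℕ}

lemma orbitFinset_swap_pow_apply_mul (hj0 : 0 < j) (hj : j < #(σ.orbitFinset x)) :
    (swap ((σ ^ j) x) x * σ).orbitFinset x = (range j).image fun i => (σ ^ i) x := by
  set τ := swap ((σ ^ j) x) x * σ
  -- `τ` follows `σ` from `x` up to `σ ^ (j - 1) x`, which it sends back to `x`.
  have hinj := pow_apply_injOn_orbitFinset σ x
  have hτ : ∀ i < j, (τ ^ i) x = (σ ^ i) x := by
    intro i hi
    induction i with
    | zero => rfl
    | succ i ih =>
      rw [pow_succ', mul_apply, ih (by omega), mul_apply, ← mul_apply σ, ← pow_succ']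
      refine swap_apply_of_ne_of_ne (fun h => ?_) (fun h => ?_)
      · have : i + 1 = j := hinj (Set.mem_Iio.2 (by omega)) (Set.mem_Iio.2 hj) h
        omega
      · exact pow_apply_ne_self_of_lt i.add_one_pos (by omega) h
  have hτj : (τ ^ j) x = x := by
    obtain ⟨i, rfl⟩ : ∃ i, j = i + 1 := ⟨j - 1, by omega⟩
    rw [pow_succ', mul_apply, hτ i (by omega), mul_apply, ← mul_apply σ, ← pow_succ',
      swap_apply_left]
  ext y
  simp only [mem_orbitFinset, mem_image, mem_range]
  constructor
  · rintro h
    obtain ⟨n, rfl⟩ := h.exists_nat_pow_eq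
    refine ⟨n % j, Nat.mod_lt n hj0, ?_⟩
    rw [← hτ _ (Nat.mod_lt n hj0)]
    conv_rhs => rw [← Nat.mod_add_div n j, pow_add, mul_apply, pow_mul,
      pow_apply_eq_self_of_apply_eq_self hτj]
  · rintro ⟨i, hi, rfl⟩
    exact hτ i hi ▸ sameCycle_pow_right.2 SameCycle.rfl

lemma card_orbitFinset_swap_pow_apply_mul (hj0 : 0 < j) (hj : j < #(σ.orbitFinset x)) :
    #((swap ((σ ^ j) x) x * σ).orbitFinset x) = j := by
  rw [orbitFinset_swap_pow_apply_mul hj0 hj, card_image_of_injOn, card_range]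
  exact (pow_apply_injOn_orbitFinset σ x).mono fun i hi => (mem_range.1 hi).trans hj

lemma not_sameCycle_swap_pow_apply_mul (hj0 : 0 < j) (hj : j < #(σ.orbitFinset x)) :
    ¬(swap ((σ ^ j) x) x * σ).SameCycle x ((σ ^ j) x) := by
  rw [← mem_orbitFinset, orbitFinset_swap_pow_apply_mul hj0 hj, mem_image]
  rintro ⟨i, hi, h⟩
  have : i = j :=
    pow_apply_injOn_orbitFinset σ x (Set.mem_Iio.2 ((mem_range.1 hi).trans hj)) hj h
  exact (mem_range.1 hi).ne this

lemma card_orbitFinset_swap_pow_apply_mul_pow_apply (hj0 : 0 < j)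
    (hj : j < #(σ.orbitFinset x)) :
    #((swap ((σ ^ j) x) x * σ).orbitFinset ((σ ^ j) x)) = #(σ.orbitFinset x) - j := by
  have hunion := orbitFinset_union_swap_mul (σ := σ) (a := (σ ^ j) x) (b := x)
  rw [orbitFinset_eq_iff.2 (sameCycle_pow_left.2 SameCycle.rfl), union_self] at hunion
  rw [← hunion, card_union_of_disjoint, card_orbitFinset_swap_pow_apply_mul hj0 hj,
    Nat.add_sub_cancel]
  exact disjoint_orbitFinset_iff.2 fun h => not_sameCycle_swap_pow_apply_mul hj0 hj h.symm

lemma prod_orbits_swap_pow_apply_mul {β : Type*} [CommMonoid β] (f : ℕ → β) (hj0 : 0 < j)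
    (hj : j < #(σ.orbitFinset x)) :
    ∏ O ∈ (swap ((σ ^ j) x) x * σ).orbits, f #O =
      (∏ O ∈ σ.orbits with _root_.Disjoint O (σ.orbitFinset x), f #O) *
        (f (#(σ.orbitFinset x) - j) * f j) := by
  have hne : (swap ((σ ^ j) x) x * σ).orbitFinset ((σ ^ j) x) ≠
      (swap ((σ ^ j) x) x * σ).orbitFinset x := fun he =>
    not_sameCycle_swap_pow_apply_mul hj0 hj (orbitFinset_eq_iff.1 he).symm
  rw [prod_orbits_eq_mul_prod_pair (fun O => f #O) ((σ ^ j) x) x, orbitFinset_union_swap_mul,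
    filter_disjoint_orbits_swap_mul, prod_pair hne,
    card_orbitFinset_swap_pow_apply_mul_pow_apply hj0 hj,
    card_orbitFinset_swap_pow_apply_mul hj0 hj,
    orbitFinset_eq_iff.2 (sameCycle_pow_left.2 SameCycle.rfl), union_self]

end Split

lemma not_sameCycle_swap_mul (hab : a ≠ b) (h : σ.SameCycle a b) :
    ¬(swap a b * σ).SameCycle a b := by
  obtain ⟨j, hj, rfl⟩ := (isCycleOn_orbitFinset σ b).exists_pow_eq (mem_orbitFinset_self σ b)
    (mem_orbitFinset.2 h.symm)
  have hj0 : 0 < j := Nat.pos_of_ne_zero fun h0 => hab (by simp [h0])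
  exact fun h' => not_sameCycle_swap_pow_apply_mul hj0 hj h'.symm

lemma card_pair_orbitFinset :
    #{σ.orbitFinset a, σ.orbitFinset b} = if σ.SameCycle a b then 1 else 2 := by
  split_ifs with h
  · rw [orbitFinset_eq_iff.2 h, pair_eq_singleton, card_singleton]
  · exact card_pair (mt orbitFinset_eq_iff.1 h)

lemma sum_card_sub_one_add_card_pair_orbitFinset :
    ∑ O ∈ {σ.orbitFinset a, σ.orbitFinset b}, (#O - 1) +
        #{σ.orbitFinset a, σ.orbitFinset b} =
      #(σ.orbitFinset a ∪ σ.orbitFinset b) := by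
  have ha := card_pos.2 ⟨a, mem_orbitFinset_self σ a⟩
  have hb := card_pos.2 ⟨b, mem_orbitFinset_self σ b⟩
  by_cases h : σ.SameCycle a b
  · rw [orbitFinset_eq_iff.2 h, pair_eq_singleton, sum_singleton, card_singleton, union_self]
    omega
  · rw [sum_pair (mt orbitFinset_eq_iff.1 h), card_pair (mt orbitFinset_eq_iff.1 h),
      card_union_of_disjoint (disjoint_orbitFinset_iff.2 h)]
    omega

end Equiv.Perm

section PermLength

open Equiv.Perm

variable {k : ℕ} {σ : Perm (Fin k)} {a b : Fin k}

lemma permLength_eq_sum_orbits (σ : Perm (Fin k)) :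
    permLength σ = ∑ O ∈ σ.orbits, (#O - 1) := by
  rw [← sum_map_cycleType (fun m => m - 1) rfl, permLength, Multiset.sum_map_tsub,
    Multiset.map_id', Multiset.map_const', Multiset.sum_replicate, smul_eq_mul, mul_one]
  exact fun m hm => (two_le_of_mem_cycleType hm).trans' one_le_two

lemma permLength_swap_mul_add_card :
    permLength (swap a b * σ) + #{(swap a b * σ).orbitFinset a, (swap a b * σ).orbitFinset b} =
      permLength σ + #{σ.orbitFinset a, σ.orbitFinset b} := by
  have h := sum_orbits_swap_mul (σ := σ) (fun O => #O - 1) a b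
  have h₁ := sum_card_sub_one_add_card_pair_orbitFinset (σ := σ) (a := a) (b := b)
  have h₂ := sum_card_sub_one_add_card_pair_orbitFinset (σ := swap a b * σ) (a := a) (b := b)
  rw [orbitFinset_union_swap_mul] at h₂
  rw [permLength_eq_sum_orbits, permLength_eq_sum_orbits]
  omega

lemma permLength_swap_mul_of_sameCycle (hab : a ≠ b) (h : σ.SameCycle a b) :
    permLength (swap a b * σ) + 1 = permLength σ := by
  have := permLength_swap_mul_add_card (σ := σ) (a := a) (b := b)
  rw [card_pair_orbitFinset, card_pair_orbitFinset, if_pos h,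
    if_neg (not_sameCycle_swap_mul hab h)] at this
  omega

lemma permLength_le_swap_mul_of_not_sameCycle (h : ¬σ.SameCycle a b) :
    permLength σ ≤ permLength (swap a b * σ) := by
  have := permLength_swap_mul_add_card (σ := σ) (a := a) (b := b)
  rw [card_pair_orbitFinset, card_pair_orbitFinset, if_neg h] at this
  split_ifs at this <;> omega

lemma permLength_swap_mul_le (a b : Fin k) (σ : Perm (Fin k)) :
    permLength (swap a b * σ) ≤ permLength σ + 1 := by
  have := permLength_swap_mul_add_card (σ := σ) (a := a) (b := b)
  rw [card_pair_orbitFinset, card_pair_orbitFinset] at this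
  split_ifs at this <;> omega

lemma permLength_prod_swap_le (L : List (Fin k × Fin k)) :
    permLength (L.map fun p => swap p.1 p.2).prod ≤ L.length := by
  induction L with
  | nil => simp [permLength]
  | cons p L ih =>
    rw [List.map_cons, List.prod_cons, List.length_cons]
    exact (permLength_swap_mul_le p.1 p.2 _).trans (by omega)

end PermLength

theorem catalan_succ_eq_sum_range (n : ℕ) :
    catalan (n + 1) = ∑ i ∈ range (n + 1), catalan (n - i) * catalan i := by
  rw [catalan_succ, Fin.sum_univ_eq_sum_range (fun i => catalan i * catalan (n - i))]
  exact sum_congr rfl fun i _ => mul_comm _ _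

section MonotoneFactorization

open Equiv.Perm

variable {k : ℕ} {σ : Perm (Fin k)} {s t M : Fin k} {L : List (Fin k × Fin k)}

def minimalMonotoneFactorizations (σ : Perm (Fin k)) : Set (List (Fin k × Fin k)) :=
  {L | L.length = permLength σ ∧ IsMonotoneFactorization σ L}

lemma minimalMonotoneFactorizations_finite (σ : Perm (Fin k)) :
    (minimalMonotoneFactorizations σ).Finite :=
  (List.finite_length_eq _ _).subset fun _ hL => hL.1

lemma isMonotoneFactorization_nil_iff : IsMonotoneFactorization σ [] ↔ σ = 1 := by
  simp [IsMonotoneFactorization, eq_comm]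

lemma isMonotoneFactorization_cons_iff :
    IsMonotoneFactorization σ ((s, t) :: L) ↔
      s < t ∧ (∀ p ∈ L, p.2 ≤ t) ∧ IsMonotoneFactorization (swap s t * σ) L := by
  have hprod : swap s t * (L.map fun p => swap p.1 p.2).prod = σ ↔
      (L.map fun p => swap p.1 p.2).prod = swap s t * σ :=
    ⟨fun h => by rw [← h, swap_mul_self_mul], fun h => by rw [h, swap_mul_self_mul]⟩
  simp only [IsMonotoneFactorization, List.forall_mem_cons, List.pairwise_cons, List.map_cons,
    List.prod_cons, hprod]
  tauto

lemma cons_mem_minimalMonotoneFactorizations_iff :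
    (s, t) :: L ∈ minimalMonotoneFactorizations σ ↔
      s < t ∧ (∀ p ∈ L, p.2 ≤ t) ∧ σ.SameCycle s t ∧
        L ∈ minimalMonotoneFactorizations (swap s t * σ) := by
  simp only [minimalMonotoneFactorizations, Set.mem_ofPred_eq, List.length_cons,
    isMonotoneFactorization_cons_iff]
  constructor
  · rintro ⟨hlen, hst, hle, hL⟩
    have hmin : permLength (swap s t * σ) ≤ L.length := hL.2.2 ▸ permLength_prod_swap_le L
    have hsc : σ.SameCycle s t := by
      by_contra h
      have := permLength_le_swap_mul_of_not_sameCycle (b := t) h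
      omega
    have := permLength_swap_mul_of_sameCycle hst.ne hsc
    exact ⟨hst, hle, hsc, by omega, hL⟩
  · rintro ⟨hst, hle, hsc, hlen, hL⟩
    have := permLength_swap_mul_of_sameCycle hst.ne hsc
    exact ⟨by omega, hst, hle, hL⟩

lemma snd_mem_support_of_mem_minimalMonotoneFactorizations
    (hL : L ∈ minimalMonotoneFactorizations σ) : ∀ p ∈ L, p.2 ∈ σ.support := by
  induction L generalizing σ with
  | nil => simp
  | cons q L ih =>
    obtain ⟨hst, -, hsc, hL'⟩ := cons_mem_minimalMonotoneFactorizations_iff.1 hL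
    have hs := mem_support_of_sameCycle hst.ne hsc
    have ht := hsc.mem_support_iff.1 hs
    intro p hp
    rcases List.mem_cons.1 hp with rfl | hp
    · exact ht
    · exact support_swap_mul_subset hs ht (ih hL' p hp)

lemma minimalMonotoneFactorizations_one :
    minimalMonotoneFactorizations (1 : Perm (Fin k)) = {[]} := by
  ext L
  simp only [minimalMonotoneFactorizations, Set.mem_ofPred_eq, Set.mem_singleton_iff]
  rw [show permLength (1 : Perm (Fin k)) = 0 by simp [permLength], List.length_eq_zero_iff]
  exact ⟨And.left, fun h => ⟨h, h ▸ isMonotoneFactorization_nil_iff.2 rfl⟩⟩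

lemma minimalMonotoneFactorizations_eq_biUnion (hM : IsGreatest (σ.support : Set (Fin k)) M) :
    minimalMonotoneFactorizations σ =
      ⋃ s ∈ ((σ.orbitFinset M).erase M : Set (Fin k)),
        List.cons (s, M) '' minimalMonotoneFactorizations (swap s M * σ) := by
  ext L
  simp only [Set.mem_iUnion, Set.mem_image, coe_erase, Set.mem_sdiff, mem_coe, mem_orbitFinset,
    Set.mem_singleton_iff, exists_prop]
  constructor
  · intro hL
    obtain _ | ⟨⟨s, t⟩, L⟩ := L
    · have hM1 := hM.1
      rw [isMonotoneFactorization_nil_iff.1 hL.2, support_one] at hM1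
      exact absurd hM1 (notMem_empty M)
    obtain ⟨hst, hle, hsc, hL'⟩ := cons_mem_minimalMonotoneFactorizations_iff.1 hL
    -- if `t < M`, no transposition of the factorization moves `M`
    have htM : t = M := by
      refine le_antisymm (hM.2 (snd_mem_support_of_mem_minimalMonotoneFactorizations hL _
        List.mem_cons_self)) (not_lt.1 fun htM => mem_support.1 hM.1 ?_)
      rw [← hL.2.2.2]
      refine prod_swap_apply_of_forall_ne fun p hp => ?_
      have hp2 : p.2 ≤ t := by
        rcases List.mem_cons.1 hp with rfl | hp
        · exact le_rfl
        · exact hle p hp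
      exact ⟨((hL.2.1 p hp).trans_le hp2).trans htM |>.ne, (hp2.trans_lt htM).ne⟩
    subst htM
    exact ⟨s, ⟨hsc.symm, hst.ne⟩, L, hL', rfl⟩
  · rintro ⟨s, ⟨hsM, hne⟩, L, hL, rfl⟩
    have hs : s ∈ σ.support := hsM.mem_support_iff.1 hM.1
    exact cons_mem_minimalMonotoneFactorizations_iff.2 ⟨lt_of_le_of_ne (hM.2 hs) hne,
      fun p hp => hM.2 (support_swap_mul_subset hs hM.1
        (snd_mem_support_of_mem_minimalMonotoneFactorizations hL p hp)), hsM.symm, hL⟩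

lemma numMF_permLength_eq_sum (hM : IsGreatest (σ.support : Set (Fin k)) M) :
    numMF σ (permLength σ) =
      ∑ s ∈ (σ.orbitFinset M).erase M, numMF (swap s M * σ) (permLength (swap s M * σ)) := by
  change (minimalMonotoneFactorizations σ).ncard = _
  rw [minimalMonotoneFactorizations_eq_biUnion hM, Set.Finite.ncard_biUnion (finite_toSet _)
    (fun s _ => (minimalMonotoneFactorizations_finite _).image _), finsum_mem_coe_finset]
  · exact sum_congr rfl fun s _ => Set.ncard_image_of_injective _ List.cons_injective
  · intro s _ s' _ hss'
    refine Set.disjoint_left.2 ?_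
    rintro _ ⟨L, -, rfl⟩ ⟨L', -, h⟩
    exact hss' (Prod.ext_iff.1 (List.cons_eq_cons.1 h).1).1.symm

lemma prod_orbits_one_catalan :
    ∏ O ∈ (1 : Perm (Fin k)).orbits, catalan (#O - 1) = 1 := by
  refine prod_eq_one fun O hO => ?_
  obtain ⟨x, rfl⟩ := mem_orbits.1 hO
  rw [orbitFinset_of_apply_eq (one_apply x), card_singleton, Nat.sub_self, catalan_zero]

theorem numMF_permLength_eq_prod_orbits (σ : Perm (Fin k)) :
    numMF σ (permLength σ) = ∏ O ∈ σ.orbits, catalan (#O - 1) := by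
  induction hl : permLength σ using Nat.strong_induction_on generalizing σ with
  | _ l ih =>
  subst hl
  rcases σ.support.eq_empty_or_nonempty with h | hs
  · rw [support_eq_empty_iff.1 h, prod_orbits_one_catalan]
    change (minimalMonotoneFactorizations 1).ncard = 1
    rw [minimalMonotoneFactorizations_one, Set.ncard_singleton]
  set M := σ.support.max' hs
  have hM : IsGreatest (σ.support : Set (Fin k)) M :=
    ⟨max'_mem _ _, fun y hy => le_max' _ _ hy⟩
  obtain ⟨n, hn⟩ : ∃ n, #(σ.orbitFinset M) = n + 1 + 1 :=
    ⟨_, (Nat.sub_add_cancel (one_lt_card_orbitFinset hM.1)).symm⟩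
  have hsplit : ∀ i ∈ range (n + 1),
      numMF (swap ((σ ^ (i + 1)) M) M * σ) (permLength (swap ((σ ^ (i + 1)) M) M * σ)) =
        (∏ O ∈ σ.orbits with _root_.Disjoint O (σ.orbitFinset M), catalan (#O - 1)) *
          (catalan (n - i) * catalan i) := by
    intro i hi
    have hj : i + 1 < #(σ.orbitFinset M) := by rw [mem_range] at hi; omega
    have hlt := permLength_swap_mul_of_sameCycle (pow_apply_ne_self_of_lt i.add_one_pos hj)
      (sameCycle_pow_left.2 (SameCycle.refl σ M))
    rw [ih _ (by omega) (swap ((σ ^ (i + 1)) M) M * σ) rfl,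
      prod_orbits_swap_pow_apply_mul (fun m => catalan (m - 1)) i.add_one_pos hj, hn]
    congr 3
    omega
  rw [numMF_permLength_eq_sum hM, ← sum_range_pow_apply_eq_sum_erase, hn, Nat.add_sub_cancel,
    sum_congr rfl hsplit, ← mul_sum, ← catalan_succ_eq_sum_range,
    prod_orbits_eq_prod_filter_disjoint_mul _ M, hn, Nat.add_sub_cancel]

end MonotoneFactorization

/-- The number of monotone factorizations of `σ` of minimal length `|σ|` equals
`∏_i Cat(μ_i − 1)` over the cycle type `μ` of `σ`. -/
theorem numMF_min_length {k : ℕ} (σ : Equiv.Perm (Fin k)) :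
    numMF σ (permLength σ) = (σ.cycleType.map fun m => catalan (m - 1)).prod := by
  rw [numMF_permLength_eq_prod_orbits, Equiv.Perm.prod_map_cycleType _ catalan_zero]
end
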